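/- arXiv:2502.04155 — 2 statements merged into one kernel-verified Lean document; each statement's English description precedes it below -/
import Mathlib

section
/- Suppose a feasible configuration x is not a Nash equilibrium: there exist indices i,j,k and modes m,m' with x_{ijk}^m > 0, c_{ijk}^{m'} < c_{ijk}^m, and the capacity constraint for (i,m') strictly slack, i.e., ∑_{j',k'} d_{ij'k'} x_{ij'k'}^{m'} < C_i^{m'}. Then, assuming d_{ijk} > 0, there exists ε > 0 such that the configuration x' obtained by decreasing x_{ijk}^m by ε and increasing x_{ijk}^{m'} by ε is feasible and has strictly smaller total cost ∑ c P x than x. -/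
/-!
Moving `ε` of the flow on `(i, j, k)` from mode `m` to mode `m'` leaves every mode sum
`∑ₘ x_{ijk}^m` unchanged, hence also every population sum, and changes the capacity load of
`(i, m)` by `-d_{ijk} ε` and that of `(i, m')` by `+d_{ijk} ε`. Taking
`ε = min (x_{ijk}^m, (C_i^{m'} - load) / d_{ijk})` keeps the flow nonnegative and the load of
`(i, m')` within capacity, while the cost changes by `ε d_{ijk} (c_{ijk}^{m'} - c_{ijk}^m) < 0`.
-/

open Finset

namespace ModeSwitch

variable {α γ μ : Type*} [DecidableEq α] [DecidableEq γ] [DecidableEq μ]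

def switch (x : α → α → γ → μ → ℝ) (i j : α) (k : γ) (m m' : μ) (ε : ℝ) :
    α → α → γ → μ → ℝ :=
  fun a b e f =>
    if a = i ∧ b = j ∧ e = k ∧ f = m then x a b e f - ε
    else if a = i ∧ b = j ∧ e = k ∧ f = m' then x a b e f + ε
    else x a b e f

variable {x : α → α → γ → μ → ℝ} {i j : α} {k : γ} {m m' : μ} {ε : ℝ}

theorem switch_apply_eq_add_sub (hmm' : m ≠ m') (a b : α) (e : γ) (f : μ) :
    switch x i j k m m' ε a b e f =
      x a b e f + (if a = i ∧ b = j ∧ e = k ∧ f = m' then ε else 0)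
        - (if a = i ∧ b = j ∧ e = k ∧ f = m then ε else 0) := by
  unfold switch
  split_ifs <;> simp_all

theorem switch_nonneg (hx : ∀ a b e f, 0 ≤ x a b e f) (hε : 0 ≤ ε) (hεx : ε ≤ x i j k m)
    (a b : α) (e : γ) (f : μ) : 0 ≤ switch x i j k m m' ε a b e f := by
  unfold switch
  split_ifs with hm
  · obtain ⟨rfl, rfl, rfl, rfl⟩ := hm
    linarith
  · linarith [hx a b e f]
  · exact hx a b e f

theorem sum_switch_mode [Fintype μ] (hmm' : m ≠ m') (a b : α) (e : γ) :
    ∑ f, switch x i j k m m' ε a b e f = ∑ f, x a b e f := by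
  simp [switch_apply_eq_add_sub hmm', sum_add_distrib, sum_sub_distrib, ite_and]

theorem sum_sum_mul_switch [Fintype α] [Fintype γ] (hmm' : m ≠ m') (w : α → γ → ℝ) (a : α)
    (f : μ) :
    ∑ b, ∑ e, w b e * switch x i j k m m' ε a b e f =
      ∑ b, ∑ e, w b e * x a b e f + (if a = i ∧ f = m' then w j k * ε else 0)
        - (if a = i ∧ f = m then w j k * ε else 0) := by
  simp only [switch_apply_eq_add_sub hmm', mul_add, mul_sub, mul_ite, mul_zero,
    sum_add_distrib, sum_sub_distrib]
  by_cases ha : a = i <;> by_cases hf : f = m <;> by_cases hf' : f = m' <;>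
    simp [ha, hf, hf', ite_and]

theorem sum_mul_switch [Fintype α] [Fintype γ] [Fintype μ] (hmm' : m ≠ m')
    (w : α → α → γ → μ → ℝ) :
    ∑ a, ∑ b, ∑ e, ∑ f, w a b e f * switch x i j k m m' ε a b e f =
      ∑ a, ∑ b, ∑ e, ∑ f, w a b e f * x a b e f + ε * (w i j k m' - w i j k m) := by
  simp only [switch_apply_eq_add_sub hmm', mul_add, mul_sub, mul_ite, mul_zero,
    sum_add_distrib, sum_sub_distrib]
  simp [ite_and]
  ring

def IsFeasible [Fintype α] [Fintype γ] [Fintype μ] (d : α → α → γ → ℝ) (P : γ → ℝ)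
    (C : α → μ → ℝ) (x : α → α → γ → μ → ℝ) : Prop :=
  (∀ a b e f, 0 ≤ x a b e f) ∧
    (∀ a e, ∑ f, x a a e f = 0) ∧
    (∀ a b e, a ≠ b → ∑ f, x a b e f = 1) ∧
    (∀ e, ∑ a, ∑ b, ∑ f, d a b e * x a b e f = P e) ∧
    (∀ a f, ∑ b, ∑ e, d a b e * x a b e f ≤ C a f)

theorem IsFeasible.switch [Fintype α] [Fintype γ] [Fintype μ] {d : α → α → γ → ℝ} {P : γ → ℝ}
    {C : α → μ → ℝ} (hx : IsFeasible d P C x) (hmm' : m ≠ m') (hd : 0 ≤ d i j k) (hε : 0 ≤ ε)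
    (hεx : ε ≤ x i j k m) (hcap : ∑ b, ∑ e, d i b e * x i b e m' + d i j k * ε ≤ C i m') :
    IsFeasible d P C (switch x i j k m m' ε) := by
  obtain ⟨hnonneg, hdiag, hrow, hpop, hload⟩ := hx
  refine ⟨switch_nonneg hnonneg hε hεx, fun a e => ?_, fun a b e hab => ?_, fun e => ?_,
    fun a f => ?_⟩
  · rw [sum_switch_mode hmm', hdiag]
  · rw [sum_switch_mode hmm', hrow a b e hab]
  · simpa only [← mul_sum, sum_switch_mode hmm'] using hpop e
  · rw [sum_sum_mul_switch hmm']
    have hgain : ∑ b, ∑ e, d a b e * x a b e f + (if a = i ∧ f = m' then d a j k * ε else 0)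
        ≤ C a f := by
      split_ifs with h
      · obtain ⟨rfl, rfl⟩ := h
        exact hcap
      · simpa using hload a f
    have hloss : 0 ≤ if a = i ∧ f = m then d a j k * ε else 0 := by
      split_ifs with h
      · obtain ⟨rfl, -⟩ := h
        exact mul_nonneg hd hε
      · exact le_rfl
    linarith

end ModeSwitch

open ModeSwitch

theorem improving_switch_general (N K M : ℕ)
    (d : Fin N → Fin N → Fin K → ℝ) (Pk : Fin K → ℝ)
    (C : Fin N → Fin (M + 1) → ℝ)
    (c : Fin N → Fin N → Fin K → Fin (M + 1) → ℝ)
    (Feasible : (Fin N → Fin N → Fin K → Fin (M + 1) → ℝ) → Prop)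
    (hFeas : Feasible = fun x => (∀ i j k m, 0 ≤ x i j k m) ∧
      (∀ i k, ∑ m, x i i k m = 0) ∧
      (∀ i j k, i ≠ j → ∑ m, x i j k m = 1) ∧
      (∀ k, ∑ i, ∑ j, ∑ m, d i j k * x i j k m = Pk k) ∧
      (∀ i m, ∑ j, ∑ k, d i j k * x i j k m ≤ C i m))
    (x : Fin N → Fin N → Fin K → Fin (M + 1) → ℝ)
    (hx : Feasible x)
    (i j : Fin N) (k : Fin K) (m m' : Fin (M + 1))
    (hpos : 0 < x i j k m)
    (hcheaper : c i j k m' < c i j k m)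
    (hslack : ∑ j', ∑ k', d i j' k' * x i j' k' m' < C i m')
    (hdijk : 0 < d i j k) :
    ∃ ε > (0 : ℝ),
      Feasible (fun i' j' k' m'' =>
        if i' = i ∧ j' = j ∧ k' = k ∧ m'' = m then x i' j' k' m'' - ε
        else if i' = i ∧ j' = j ∧ k' = k ∧ m'' = m' then x i' j' k' m'' + ε
        else x i' j' k' m'') ∧
      (∑ i', ∑ j', ∑ k', ∑ m'', c i' j' k' m'' * d i' j' k' *
          (if i' = i ∧ j' = j ∧ k' = k ∧ m'' = m then x i' j' k' m'' - ε
           else if i' = i ∧ j' = j ∧ k' = k ∧ m'' = m' then x i' j' k' m'' + ε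
           else x i' j' k' m'')) <
      (∑ i', ∑ j', ∑ k', ∑ m'', c i' j' k' m'' * d i' j' k' * x i' j' k' m'') := by
  subst hFeas
  have hmm' : m ≠ m' := fun h => (h ▸ hcheaper).false
  set ε := min (x i j k m) ((C i m' - ∑ j', ∑ k', d i j' k' * x i j' k' m') / d i j k)
  have hε : 0 < ε := lt_min hpos (div_pos (sub_pos.mpr hslack) hdijk)
  have hcap : ∑ j', ∑ k', d i j' k' * x i j' k' m' + d i j k * ε ≤ C i m' := by
    have := (le_div_iff₀' hdijk).mp (min_le_right _ _ : ε ≤ _)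
    linarith
  have hfeas : IsFeasible d Pk C (switch x i j k m m' ε) :=
    IsFeasible.switch hx hmm' hdijk.le hε.le (min_le_left _ _) hcap
  refine ⟨ε, hε, hfeas, ?_⟩
  have hcost := sum_mul_switch (x := x) (i := i) (j := j) (k := k) (ε := ε) hmm'
    (fun a b e f => c a b e f * d a b e)
  have hdrop : ε * (c i j k m' * d i j k - c i j k m * d i j k) < 0 :=
    mul_neg_of_pos_of_neg hε (sub_neg.mpr (mul_lt_mul_of_pos_right hcheaper hdijk))
  simp only [switch] at hcost
  linarith

/-- If a feasible configuration is not a Nash equilibrium — i.e. some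
travelers on mode `m` could switch to a strictly cheaper, strictly slack mode
`m'` — then for small `ε > 0` moving a share `ε` of population `k` on route
`(i,j)` from mode `m` to mode `m'` stays feasible and strictly decreases the
total cost. -/
theorem improving_switch (N K M : ℕ)
    (d : Fin N → Fin N → Fin K → ℝ) (Pk : Fin K → ℝ)
    (C : Fin N → Fin (M + 1) → ℝ)
    (c : Fin N → Fin N → Fin K → Fin (M + 1) → ℝ)
    (hd : ∀ i j k, 0 ≤ d i j k)
    (Feasible : (Fin N → Fin N → Fin K → Fin (M + 1) → ℝ) → Prop)
    (hFeas : Feasible = fun x => (∀ i j k m, 0 ≤ x i j k m) ∧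
      (∀ i k, ∑ m, x i i k m = 0) ∧
      (∀ i j k, i ≠ j → ∑ m, x i j k m = 1) ∧
      (∀ k, ∑ i, ∑ j, ∑ m, d i j k * x i j k m = Pk k) ∧
      (∀ i m, ∑ j, ∑ k, d i j k * x i j k m ≤ C i m))
    (x : Fin N → Fin N → Fin K → Fin (M + 1) → ℝ)
    (hx : Feasible x)
    (i j : Fin N) (k : Fin K) (m m' : Fin (M + 1))
    (hpos : 0 < x i j k m)
    (hcheaper : c i j k m' < c i j k m)
    (hslack : ∑ j', ∑ k', d i j' k' * x i j' k' m' < C i m')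
    (hdijk : 0 < d i j k) :
    ∃ ε > (0 : ℝ),
      Feasible (fun i' j' k' m'' =>
        if i' = i ∧ j' = j ∧ k' = k ∧ m'' = m then x i' j' k' m'' - ε
        else if i' = i ∧ j' = j ∧ k' = k ∧ m'' = m' then x i' j' k' m'' + ε
        else x i' j' k' m'') ∧
      (∑ i', ∑ j', ∑ k', ∑ m'', c i' j' k' m'' * d i' j' k' *
          (if i' = i ∧ j' = j ∧ k' = k ∧ m'' = m then x i' j' k' m'' - ε
           else if i' = i ∧ j' = j ∧ k' = k ∧ m'' = m' then x i' j' k' m'' + ε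
           else x i' j' k' m'')) <
      (∑ i', ∑ j', ∑ k', ∑ m'', c i' j' k' m'' * d i' j' k' * x i' j' k' m'') :=
  improving_switch_general N K M d Pk C c Feasible hFeas x hx i j k m m' hpos hcheaper hslack hdijk
end

section
/- If capacity constraints are never binding at a Nash equilibrium x (i.e., ∑_{j,k} d_{ijk} x_{ijk}^m < C_i^m for all i,m), then for all i,j,k with d_{ijk} > 0, every mode m with x_{ijk}^m > 0 satisfies c_{ijk}^m = min_{m'} c_{ijk}^{m'}, and consequently x globally minimizes the total cost ∑_{i,j,k,m} c_{ijk}^m d_{ijk} x_{ijk}^m over all configurations satisfying ∑_m x_{ijk}^m = 1 and x ≥ 0. -/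
/-!
Without binding capacities the Nash condition reduces to its first alternative, so on every
route each used mode has minimal cost. A probability vector supported on minimisers of a linear
cost minimises that cost over the whole simplex, and the routes with `i = j` carry no demand.
-/

open Finset

theorem sum_mul_le_sum_mul_of_support_minimal {ι : Type*} [Fintype ι] {c x y : ι → ℝ}
    (hx0 : ∀ m, 0 ≤ x m) (hx1 : ∑ m, x m = 1) (hmin : ∀ m, 0 < x m → ∀ m', c m ≤ c m')
    (hy0 : ∀ m, 0 ≤ y m) (hy1 : ∑ m, y m = 1) :
    ∑ m, c m * x m ≤ ∑ m, c m * y m := by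
  obtain ⟨m₀, -, hm₀⟩ : ∃ m₀ ∈ univ, (0 : ι → ℝ) m₀ < x m₀ :=
    exists_lt_of_sum_lt (by simp [hx1])
  calc ∑ m, c m * x m ≤ ∑ m, c m₀ * x m := sum_le_sum fun m _ => by
        rcases (hx0 m).eq_or_lt with hxm | hxm
        · simp [← hxm]
        · exact mul_le_mul_of_nonneg_right (hmin m hxm m₀) hxm.le
    _ = ∑ m, c m₀ * y m := by rw [← mul_sum, ← mul_sum, hx1, hy1]
    _ ≤ ∑ m, c m * y m :=
        sum_le_sum fun m _ => mul_le_mul_of_nonneg_right (hmin m₀ hm₀ m) (hy0 m)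

/-- If capacity constraints are never binding at a Nash equilibrium `x`, then
every mode with positive share on a route with positive demand has minimal
cost, and consequently `x` globally minimizes total cost over all
configurations with nonnegative shares summing to one. -/
theorem slack_nash_minimizes (N K M : ℕ)
    (d : Fin N → Fin N → Fin K → ℝ) (C : Fin N → Fin (M + 1) → ℝ)
    (c : Fin N → Fin N → Fin K → Fin (M + 1) → ℝ)
    (hd : ∀ i j k, 0 ≤ d i j k) (hdii : ∀ i k, d i i k = 0)
    (x : Fin N → Fin N → Fin K → Fin (M + 1) → ℝ)
    (hfeas : (∀ i j k m, 0 ≤ x i j k m) ∧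
      (∀ i j k, i ≠ j → ∑ m, x i j k m = 1))
    (hnash : ∀ i j k m, 0 < x i j k m → ∀ m',
      c i j k m ≤ c i j k m' ∨
      (∑ j', ∑ k', d i j' k' * x i j' k' m') = C i m')
    (hslack : ∀ i m, ∑ j, ∑ k, d i j k * x i j k m < C i m) :
    (∀ i j k, 0 < d i j k → ∀ m, 0 < x i j k m → ∀ m',
      c i j k m ≤ c i j k m') ∧
    (∀ y : Fin N → Fin N → Fin K → Fin (M + 1) → ℝ,
      (∀ i j k m, 0 ≤ y i j k m) →
      (∀ i j k, i ≠ j → ∑ m, y i j k m = 1) →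
      (∑ i, ∑ j, ∑ k, ∑ m, c i j k m * d i j k * x i j k m) ≤
      (∑ i, ∑ j, ∑ k, ∑ m, c i j k m * d i j k * y i j k m)) := by
  obtain ⟨hx0, hx1⟩ := hfeas
  have hmin : ∀ i j k m, 0 < x i j k m → ∀ m', c i j k m ≤ c i j k m' :=
    fun i j k m hx m' => (hnash i j k m hx m').resolve_right (hslack i m').ne
  refine ⟨fun i j k _ => hmin i j k, fun y hy0 hy1 => ?_⟩
  refine sum_le_sum fun i _ => sum_le_sum fun j _ => sum_le_sum fun k _ => ?_
  by_cases hij : i = j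
  · subst hij
    simp [hdii]
  simp_rw [mul_right_comm _ (d i j k), ← sum_mul]
  exact mul_le_mul_of_nonneg_right (sum_mul_le_sum_mul_of_support_minimal (hx0 i j k)
    (hx1 i j k hij) (hmin i j k) (hy0 i j k) (hy1 i j k hij)) (hd i j k)
end
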